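/- Let R be a commutative ring, V₁, V₂ and M R-modules, u: V₂ → V₁ an R-linear map, and t ∈ V₂ ⊗_R M. For each commutative R-algebra S let i_S: Hom_S(V₁ ⊗_R S, S) → Hom_S(V₂ ⊗_R S, S) be precomposition with u ⊗ id_S, and let π_S: Hom_S(V₂ ⊗_R S, S) → M ⊗_R S be contraction against t (if t = Σ_k v_k ⊗ m_k then π_S(w) = Σ_k w(v_k ⊗ 1)·(m_k ⊗ 1)). If for every commutative R-algebra S the sequence 0 → Hom_S(V₁ ⊗_R S, S) → Hom_S(V₂ ⊗_R S, S) → M ⊗_R S → 0 is exact, then M is a finitely generated projective R-module. -/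

import Mathlib

open TensorProduct

universe u

/-- Contraction against `t ∈ V₂ ⊗_R M`: it sends an `S`-linear form `w` on `V₂ ⊗_R S` to
`Σ_k w(v_k ⊗ 1)·(m_k ⊗ 1) ∈ M ⊗_R S`, where `t = Σ_k v_k ⊗ m_k`. -/
noncomputable def contractAgainst (R V₂ M : Type u) [CommRing R]
    [AddCommGroup V₂] [Module R V₂] [AddCommGroup M] [Module R M]
    (t : V₂ ⊗[R] M) (S : Type u) [CommRing S] [Algebra R S]
    (w : (S ⊗[R] V₂) →ₗ[S] S) : S ⊗[R] M :=
  LinearMap.rTensor M ((w.restrictScalars R) ∘ₗ TensorProduct.mk R S V₂ 1) t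
/-!
Over the trivial square-zero extension `S = R ⊕ N`, the sequence of the hypothesis contains as a
direct summand the sequence `0 → Hom(V₁, N) → Hom(V₂, N) → N ⊗ M → 0`, which is therefore exact for
every `R`-module `N`. Since `Hom(V, -)` is left exact, a diagram chase shows that `- ⊗ M` preserves
injections, so `M` is flat. Since `Hom(V, -)` commutes with products, `R^K ⊗ M → M^K` is injective;
for a surjection `R^n → M` with kernel `K`, the tautological element of `R^K ⊗ R^n` then lifts to
`R^K ⊗ K`, which forces `K` to be finitely generated. Finiteness of `M` holds because `t` involves
only finitely many elements of `M`, and a flat finitely presented module is projective.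
-/

theorem TensorProduct.lid_rTensor_lTensor {R N P Q : Type*} [CommSemiring R] [AddCommMonoid N]
    [Module R N] [AddCommMonoid P] [Module R P] [AddCommMonoid Q] [Module R Q]
    (f : N →ₗ[R] R) (g : P →ₗ[R] Q) (x : N ⊗[R] P) :
    TensorProduct.lid R Q (f.rTensor Q (g.lTensor N x)) =
      g (TensorProduct.lid R P (f.rTensor P x)) := by
  induction x using TensorProduct.induction_on <;> simp_all

theorem fg_ker_of_eq_zero_of_rTensor_proj {R M ι : Type*} [CommRing R] [AddCommGroup M]
    [Module R M] [Finite ι] (p : (ι → R) →ₗ[R] M)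
    (hp : Function.Surjective p)
    (hM : ∀ x : (LinearMap.ker p → R) ⊗[R] M,
      (∀ k, (LinearMap.proj k : (LinearMap.ker p → R) →ₗ[R] R).rTensor M x = 0) → x = 0) :
    (LinearMap.ker p).FG := by
  classical
  have := Fintype.ofFinite ι
  set K := LinearMap.ker p
  let E (k : K) : (K → R) ⊗[R] (ι → R) →ₗ[R] ι → R :=
    (TensorProduct.lid R _).toLinearMap ∘ₗ (LinearMap.proj k).rTensor _
  -- the tautological element, whose `k`-th coordinate is `k` itself
  let y : (K → R) ⊗[R] (ι → R) := ∑ j, (fun k : K => (k : ι → R) j) ⊗ₜ Pi.single j 1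
  have hEy (k : K) : E k y = k := by
    ext i
    simp [E, y, map_sum, Pi.single_apply]
  have hy : y ∈ LinearMap.range (K.subtype.lTensor (K → R)) := by
    rw [← (lTensor_exact (K → R) (LinearMap.exact_subtype_ker_map p) hp).linearMap_ker_eq]
    refine hM _ fun k => (TensorProduct.lid R M).injective ?_
    rw [TensorProduct.lid_rTensor_lTensor, map_zero]
    exact (hEy k).symm ▸ k.2
  obtain ⟨y', hy'⟩ := hy
  obtain ⟨K', hK', hK'y'⟩ := TensorProduct.exists_finite_submodule_right_of_setFinite {y'}
    (Set.finite_singleton y')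
  obtain ⟨y'', hy''⟩ := hK'y' rfl
  suffices K = K'.map K.subtype from this ▸ (Module.Finite.iff_fg.mp hK').map K.subtype
  refine le_antisymm (fun k hk => ?_) (Submodule.map_subtype_le K K')
  have hk' : E ⟨k, hk⟩ y = k := hEy ⟨k, hk⟩
  rw [← hk', ← hy', ← hy'']
  simp only [E, LinearMap.comp_apply, LinearEquiv.coe_coe, TensorProduct.lid_rTensor_lTensor]
  exact Submodule.mem_map_of_mem (Submodule.coe_mem _)

section

variable {R V₁ V₂ M : Type*} [CommRing R] [AddCommGroup V₁] [Module R V₁]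
  [AddCommGroup V₂] [Module R V₂] [AddCommGroup M] [Module R M]

/-- Exactness of `0 → Hom_R(V₁, N) → Hom_R(V₂, N) → N ⊗_R M → 0`, the maps being precomposition
with `u` and contraction `w ↦ (w ⊗ id_M) t`. -/
structure ContractionExact (u : V₂ →ₗ[R] V₁) (t : V₂ ⊗[R] M) (N : Type*) [AddCommGroup N]
    [Module R N] : Prop where
  comp_injective : ∀ z : V₁ →ₗ[R] N, z ∘ₗ u = 0 → z = 0
  rTensor_eq_zero_iff : ∀ w : V₂ →ₗ[R] N, w.rTensor M t = 0 ↔ ∃ z : V₁ →ₗ[R] N, w = z ∘ₗ u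
  rTensor_surjective : ∀ x : N ⊗[R] M, ∃ w : V₂ →ₗ[R] N, w.rTensor M t = x

namespace ContractionExact

variable {u : V₂ →ₗ[R] V₁} {t : V₂ ⊗[R] M}

theorem of_retraction {N P : Type*} [AddCommGroup N] [Module R N]
    [AddCommGroup P] [Module R P] (i : N →ₗ[R] P) (r : P →ₗ[R] N) (hri : r ∘ₗ i = .id)
    (hP : ContractionExact u t P) : ContractionExact u t N where
  comp_injective z hz := by
    have : i ∘ₗ z = 0 :=
      hP.comp_injective _ (by rw [LinearMap.comp_assoc, hz, LinearMap.comp_zero])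
    rw [← LinearMap.id_comp z, ← hri, LinearMap.comp_assoc, this, LinearMap.comp_zero]
  rTensor_eq_zero_iff w := by
    constructor
    · intro hw
      obtain ⟨z, hz⟩ := (hP.rTensor_eq_zero_iff (i ∘ₗ w)).mp
        (by rw [LinearMap.rTensor_comp_apply, hw, map_zero])
      exact ⟨r ∘ₗ z, by rw [LinearMap.comp_assoc, ← hz, ← LinearMap.comp_assoc, hri,
        LinearMap.id_comp]⟩
    · rintro ⟨z, rfl⟩
      have : (i ∘ₗ z ∘ₗ u).rTensor M t = 0 :=
        (hP.rTensor_eq_zero_iff _).mpr ⟨i ∘ₗ z, (LinearMap.comp_assoc _ _ _).symm⟩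
      rw [← LinearMap.id_comp (z ∘ₗ u), ← hri, LinearMap.comp_assoc, LinearMap.rTensor_comp_apply,
        this, map_zero]
  rTensor_surjective x := by
    obtain ⟨w, hw⟩ := hP.rTensor_surjective (i.rTensor M x)
    refine ⟨r ∘ₗ w, ?_⟩
    rw [LinearMap.rTensor_comp_apply, hw, ← LinearMap.rTensor_comp_apply, hri, LinearMap.rTensor_id,
      LinearMap.id_apply]

theorem finite (h : ContractionExact u t R) : Module.Finite R M := by
  obtain ⟨M', _, ht⟩ := TensorProduct.exists_finite_submodule_right_of_setFinite {t}
    (Set.finite_singleton t)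
  obtain ⟨t', ht'⟩ := ht rfl
  have hsurj : Function.Surjective (M'.subtype.lTensor R) := fun x => by
    obtain ⟨w, rfl⟩ := h.rTensor_surjective x
    exact ⟨w.rTensor M' t', by
      rw [← ht', ← LinearMap.comp_apply, ← LinearMap.comp_apply, LinearMap.lTensor_comp_rTensor,
        LinearMap.rTensor_comp_lTensor]⟩
  have := Module.Finite.of_surjective _ hsurj
  exact Module.Finite.equiv (TensorProduct.lid R M)

theorem rTensor_subtype_injective {N : Type*} [AddCommGroup N] [Module R N] {P : Submodule R N}
    (hP : ContractionExact u t P) (hN : ContractionExact u t N)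
    (hQ : ContractionExact u t (N ⧸ P)) : Function.Injective (P.subtype.rTensor M) := by
  rw [← LinearMap.ker_eq_bot, LinearMap.ker_eq_bot']
  intro x hx
  obtain ⟨w, rfl⟩ := hP.rTensor_surjective x
  rw [← LinearMap.rTensor_comp_apply] at hx
  obtain ⟨z, hz⟩ := (hN.rTensor_eq_zero_iff _).mp hx
  have hzP : ∀ v, z v ∈ P := by
    have : P.mkQ ∘ₗ z = 0 := hQ.comp_injective _ <| by
      rw [LinearMap.comp_assoc, ← hz]
      ext v
      simp
    exact fun v => (Submodule.Quotient.mk_eq_zero P).mp (LinearMap.congr_fun this v)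
  refine (hP.rTensor_eq_zero_iff w).mpr ⟨z.codRestrict P hzP, ?_⟩
  ext v
  exact LinearMap.congr_fun hz v

theorem eq_zero_of_rTensor_proj_eq_zero {ι : Type*} {N : ι → Type*} [∀ i, AddCommGroup (N i)]
    [∀ i, Module R (N i)] (hN : ∀ i, ContractionExact u t (N i))
    (hpi : ContractionExact u t (∀ i, N i)) (x : (∀ i, N i) ⊗[R] M)
    (hx : ∀ i, (LinearMap.proj i : (∀ i, N i) →ₗ[R] N i).rTensor M x = 0) : x = 0 := by
  obtain ⟨w, rfl⟩ := hpi.rTensor_surjective x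
  choose z hz using fun i => ((hN i).rTensor_eq_zero_iff (LinearMap.proj i ∘ₗ w)).mp <| by
    rw [LinearMap.rTensor_comp_apply]
    exact hx i
  refine (hpi.rTensor_eq_zero_iff w).mpr ⟨LinearMap.pi z, ?_⟩
  ext v i
  exact LinearMap.congr_fun (hz i) v

end ContractionExact

end

section BaseChange

variable {R V₁ V₂ M : Type u} [CommRing R] [AddCommGroup V₁] [Module R V₁]
  [AddCommGroup V₂] [Module R V₂] [AddCommGroup M] [Module R M]
  (u : V₂ →ₗ[R] V₁) (t : V₂ ⊗[R] M) (S : Type u) [CommRing S] [Algebra R S]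

def DualSequenceExact : Prop :=
  Function.Injective (fun w : (S ⊗[R] V₁) →ₗ[S] S => w ∘ₗ u.baseChange S) ∧
    (∀ w : (S ⊗[R] V₂) →ₗ[S] S,
      contractAgainst R V₂ M t S w = 0 ↔
        w ∈ Set.range (fun w' : (S ⊗[R] V₁) →ₗ[S] S => w' ∘ₗ u.baseChange S)) ∧
    Function.Surjective (fun w : (S ⊗[R] V₂) →ₗ[S] S => contractAgainst R V₂ M t S w)

theorem contractAgainst_liftBaseChange (g : V₂ →ₗ[R] S) :
    contractAgainst R V₂ M t S (g.liftBaseChange S) = g.rTensor M t := by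
  have hres : (g.liftBaseChange S).restrictScalars R ∘ₗ TensorProduct.mk R S V₂ 1 = g := by
    ext v
    simp
  rw [contractAgainst, hres]

theorem liftBaseChange_comp_baseChange (g : V₁ →ₗ[R] S) :
    g.liftBaseChange S ∘ₗ u.baseChange S = (g ∘ₗ u).liftBaseChange S := by
  ext v
  simp

theorem contractionExact_of_dualSequenceExact (h : DualSequenceExact u t S) :
    ContractionExact u t S := by
  obtain ⟨hinj, hmid, hsurj⟩ := h
  refine ⟨fun z hz => ?_, fun w => ?_, fun x => ?_⟩
  · apply (LinearMap.liftBaseChangeEquiv (M := V₁) (N := S) S).injective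
    refine hinj ?_
    simp only [liftBaseChange_comp_baseChange, hz, map_zero, LinearMap.zero_comp]
  · rw [← contractAgainst_liftBaseChange, hmid]
    constructor
    · rintro ⟨W, hW⟩
      obtain ⟨z, rfl⟩ := (LinearMap.liftBaseChangeEquiv (M := V₁) (N := S) S).surjective W
      refine ⟨z, (LinearMap.liftBaseChangeEquiv (M := V₂) (N := S) S).injective ?_⟩
      exact (liftBaseChange_comp_baseChange u S z).symm.trans hW |>.symm
    · rintro ⟨z, rfl⟩
      exact ⟨z.liftBaseChange S, liftBaseChange_comp_baseChange u S z⟩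
  · obtain ⟨W, hW⟩ := hsurj x
    obtain ⟨w, rfl⟩ := (LinearMap.liftBaseChangeEquiv (M := V₂) (N := S) S).surjective W
    exact ⟨w, (contractAgainst_liftBaseChange t S w).symm.trans hW⟩

end BaseChange

theorem contractionExact_of_forall_dualSequenceExact {R V₁ V₂ M : Type u} [CommRing R]
    [AddCommGroup V₁] [Module R V₁] [AddCommGroup V₂] [Module R V₂] [AddCommGroup M] [Module R M]
    {u : V₂ →ₗ[R] V₁} {t : V₂ ⊗[R] M}
    (hex : ∀ (S : Type u) [CommRing S] [Algebra R S], DualSequenceExact u t S)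
    (N : Type u) [AddCommGroup N] [Module R N] : ContractionExact u t N := by
  -- makes `N` a symmetric bimodule, so that `TrivSqZeroExt R N` is a commutative ring
  let _ : Module Rᵐᵒᵖ N := Module.compHom N ((RingHom.id R).fromOpposite mul_comm)
  have : IsCentralScalar R N := ⟨fun _ _ => rfl⟩
  exact (contractionExact_of_dualSequenceExact u t _ (hex (TrivSqZeroExt R N))).of_retraction
    (TrivSqZeroExt.inrHom R N) (TrivSqZeroExt.sndHom R N) (LinearMap.ext fun _ => rfl)

/-- If `0 → Hom_S(V₁ ⊗_R S, S) → Hom_S(V₂ ⊗_R S, S) → M ⊗_R S → 0` is exact for every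
commutative `R`-algebra `S` (the first map being precomposition with `u ⊗ id_S`, the
second contraction against `t`), then `M` is a finitely generated projective module. -/
theorem finite_projective_of_dual_exact
    (R V₁ V₂ M : Type u) [CommRing R] [AddCommGroup V₁] [Module R V₁]
    [AddCommGroup V₂] [Module R V₂] [AddCommGroup M] [Module R M]
    (u : V₂ →ₗ[R] V₁) (t : V₂ ⊗[R] M)
    (hex : ∀ (S : Type u) [CommRing S] [Algebra R S],
      Function.Injective (fun w : (S ⊗[R] V₁) →ₗ[S] S => w ∘ₗ u.baseChange S) ∧
      (∀ w : (S ⊗[R] V₂) →ₗ[S] S,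
        contractAgainst R V₂ M t S w = 0 ↔
          w ∈ Set.range (fun w' : (S ⊗[R] V₁) →ₗ[S] S => w' ∘ₗ u.baseChange S)) ∧
      Function.Surjective (fun w : (S ⊗[R] V₂) →ₗ[S] S => contractAgainst R V₂ M t S w)) :
    Module.Finite R M ∧ Module.Projective R M := by
  have hN := contractionExact_of_forall_dualSequenceExact hex
  have : Module.Finite R M := (hN R).finite
  have : Module.Flat R M := Module.Flat.iff_rTensor_injective'.mpr fun I =>
    (hN I).rTensor_subtype_injective (hN R) (hN (R ⧸ I))
  obtain ⟨n, p, hp⟩ := Module.Finite.exists_fin' R M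
  have : Module.FinitePresentation R M := Module.finitePresentation_of_surjective p hp <|
    fg_ker_of_eq_zero_of_rTensor_proj p hp
      (ContractionExact.eq_zero_of_rTensor_proj_eq_zero (fun _ => hN R) (hN _))
  exact ⟨‹_›, Module.Flat.projective_of_finitePresentation⟩
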